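/- If the colorful graph of an approval profile has no monochromatic directed cycle, then it admits an acyclic orientation of its colors, obtainable by orienting each color involved in a three-colored triangle (which is a biclique A_i × B_i) from A_i to B_i iff min A_i < min B_i, and orienting all remaining colors arbitrarily topologically; in particular, an approval profile is possibly single-crossing iff its formula graph has no component containing complementary vertices and its colorful graph has no monochromatic cycle. -/

import Mathlib

/-- Voter `v` strictly prefers candidate `a` to `b`: approves `a` but not `b`. -/
def Pref {m n : ℕ} (P : Fin m → Fin n → Bool) (v : Fin n) (a b : Fin m) : Prop :=
  P a v = true ∧ P b v = false

/-- The set of NB constraints induced by an approval profile. -/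
def CP {m n : ℕ} (P : Fin m → Fin n → Bool) : Set (Fin n × Fin n × Fin n) :=
  {t | ∃ a b, Pref P t.1 a b ∧ Pref P t.2.1 b a ∧ Pref P t.2.2 a b}

/-- Adjacency in the formula graph of the induced NB constraints. -/
def FGAdj {m n : ℕ} (P : Fin m → Fin n → Bool) (u v : Fin n × Fin n) : Prop :=
  ∃ t ∈ CP P, (u = (t.1, t.2.1) ∧ v = (t.2.2, t.2.1)) ∨
              (u = (t.2.1, t.1) ∧ v = (t.2.1, t.2.2))

/-- Two ordered pairs lie in the same connected component of the formula graph
(i.e. bear the same color, with consistent base orientation). -/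
def SameComp {m n : ℕ} (P : Fin m → Fin n → Bool) (u v : Fin n × Fin n) : Prop :=
  Relation.EqvGen (FGAdj P) u v

/-- The directed pair `u` is an edge of the colorful graph (in its base orientation):
its connected component in the formula graph is not a singleton. -/
def ColoredPair {m n : ℕ} (P : Fin m → Fin n → Bool) (u : Fin n × Fin n) : Prop :=
  ∃ w, w ≠ u ∧ SameComp P u w

/-- The two edges bear the same color of the colorful graph (possibly with opposite
base orientations). -/
def SameColor {m n : ℕ} (P : Fin m → Fin n → Bool) (u v : Fin n × Fin n) : Prop :=
  SameComp P u v ∨ SameComp P u (v.2, v.1)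

/-- The formula graph admits a complementary pairs partition: no component contains a
pair of complementary vertices. -/
def Valid {m n : ℕ} (P : Fin m → Fin n → Bool) : Prop :=
  ∀ u : Fin n × Fin n, u.1 ≠ u.2 → ¬ SameComp P u (u.2, u.1)

/-- `O` is an orientation of the colors of the colorful graph: it consists of the
colorful-graph edges, each color is flipped as a whole or not at all, and each edge
appears in exactly one direction. -/
def IsOrient {m n : ℕ} (P : Fin m → Fin n → Bool) (O : Set (Fin n × Fin n)) : Prop :=
  (∀ u ∈ O, ColoredPair P u ∨ ColoredPair P (u.2, u.1)) ∧
  (∀ u v, SameComp P u v → (u ∈ O ↔ v ∈ O)) ∧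
  (∀ a b : Fin n, ¬ ((a, b) ∈ O ∧ (b, a) ∈ O)) ∧
  (∀ a b : Fin n, ColoredPair P (a, b) → (a, b) ∈ O ∨ (b, a) ∈ O)

/-- A non-betweenness constraint `(i, j, k)` is satisfied by a strict order `r`
if `j` is not strictly between `i` and `k`. -/
def nbSat {V : Type*} (r : V → V → Prop) (c : V × V × V) : Prop :=
  ¬ (r c.1 c.2.1 ∧ r c.2.1 c.2.2) ∧ ¬ (r c.2.2 c.2.1 ∧ r c.2.1 c.1)

/-- The color of the directed pair `u` takes part in a three-colored triangle of the
colorful graph. -/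
def InThreeColoredTriangle {m n : ℕ} (P : Fin m → Fin n → Bool)
    (u : Fin n × Fin n) : Prop :=
  ∃ x y z : Fin n,
    ColoredPair P (x, y) ∧ ColoredPair P (y, z) ∧ ColoredPair P (z, x) ∧
    ¬ SameColor P (x, y) (y, z) ∧ ¬ SameColor P (y, z) (z, x) ∧
    ¬ SameColor P (x, y) (z, x) ∧ SameColor P u (x, y)


/-!
All pairs of voters in the biclique of a candidate pair lie in one component of the formula
graph, and components can be *rolled*: if in a triangle `p → q → r → p` of incomparable pairs
no side shares its component with the reverse of the next side, then moving `(p, q)` through its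
component drags `(q, r)` and `(r, p)` along their components. Hence the component of each side
is a product `A × B` with `A ∩ B = ∅`, and the heads of one side are the tails of the next.

Orient every color from the side with the smaller least voter. Then "`a` and `b` are
incomparable and `(a, b)` is oriented forward" is transitive: for two consecutive such pairs,
either `(a, c)` is oriented forward too, or the three pairs form a rolling triangle, around which
the least voters would strictly increase. Any linear extension of this strict order satisfies
every NB constraint `(i, j, k)`, since `(i, j)` and `(k, j)` lie in one component. Conversely, a
linear order satisfying the constraints orients each component consistently, which excludes
complementary pairs in one component and monochromatic cycles.
-/

section

variable {m n : ℕ} {P : Fin m → Fin n → Bool}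

/-- `u ∈ A × B`, where `A` are the voters preferring `a` to `b` and `B` those preferring `b`
to `a`. -/
def InBiclique (P : Fin m → Fin n → Bool) (a b : Fin m) (u : Fin n × Fin n) : Prop :=
  Pref P u.1 a b ∧ Pref P u.2 b a

def Incomparable (P : Fin m → Fin n → Bool) (u : Fin n × Fin n) : Prop :=
  ∃ a b, InBiclique P a b u

theorem InBiclique.ne {a b : Fin m} {u : Fin n × Fin n} (h : InBiclique P a b u) :
    u.1 ≠ u.2 := by
  intro he
  have h₁ := h.1.1
  have h₂ := h.2.2
  rw [he] at h₁
  simp [h₁] at h₂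

theorem InBiclique.swap {a b : Fin m} {u : Fin n × Fin n} (h : InBiclique P a b u) :
    InBiclique P b a (u.2, u.1) :=
  ⟨h.2, h.1⟩

theorem Incomparable.ne {u : Fin n × Fin n} (h : Incomparable P u) : u.1 ≠ u.2 :=
  let ⟨_, _, h⟩ := h; h.ne

theorem Incomparable.swap {u : Fin n × Fin n} (h : Incomparable P u) :
    Incomparable P (u.2, u.1) :=
  let ⟨a, b, h⟩ := h; ⟨b, a, h.swap⟩

theorem SameComp.refl (u : Fin n × Fin n) : SameComp P u u :=
  Relation.EqvGen.refl u

theorem SameComp.symm {u v : Fin n × Fin n} (h : SameComp P u v) : SameComp P v u :=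
  Relation.EqvGen.symm _ _ h

theorem SameComp.trans {u v w : Fin n × Fin n} (h₁ : SameComp P u v) (h₂ : SameComp P v w) :
    SameComp P u w :=
  Relation.EqvGen.trans _ _ _ h₁ h₂

theorem SameComp.of_fgAdj {u v : Fin n × Fin n} (h : FGAdj P u v) : SameComp P u v :=
  Relation.EqvGen.rel _ _ h

theorem FGAdj.symm {u v : Fin n × Fin n} (h : FGAdj P u v) : FGAdj P v u := by
  obtain ⟨t, ⟨a, b, h₁, h₂, h₃⟩, hedge⟩ := h
  exact ⟨(t.2.2, t.2.1, t.1), ⟨a, b, h₃, h₂, h₁⟩, hedge.imp And.symm And.symm⟩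

theorem FGAdj.exists_inBiclique {u v : Fin n × Fin n} (h : FGAdj P u v) :
    ∃ a b, InBiclique P a b u ∧ InBiclique P a b v := by
  obtain ⟨t, ⟨a, b, h₁, h₂, h₃⟩, ⟨rfl, rfl⟩ | ⟨rfl, rfl⟩⟩ := h
  · exact ⟨a, b, ⟨h₁, h₂⟩, ⟨h₃, h₂⟩⟩
  · exact ⟨b, a, ⟨h₂, h₁⟩, ⟨h₂, h₃⟩⟩

/-- Each biclique lies in a single component: `(i, j) — (k, j) — (k, l)` for `(i, j)` and
`(k, l)` in it. -/
theorem SameComp.of_inBiclique {a b : Fin m} {u v : Fin n × Fin n}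
    (hu : InBiclique P a b u) (hv : InBiclique P a b v) : SameComp P u v :=
  (SameComp.of_fgAdj ⟨(u.1, u.2, v.1), ⟨a, b, hu.1, hu.2, hv.1⟩, Or.inl ⟨rfl, rfl⟩⟩).trans
    (.of_fgAdj ⟨(u.2, v.1, v.2), ⟨b, a, hu.2, hv.1, hv.2⟩, Or.inr ⟨rfl, rfl⟩⟩)

theorem SameComp.imp_of_fgAdj {Φ : Fin n × Fin n → Prop}
    (hΦ : ∀ u v, FGAdj P u v → Φ u → Φ v) {u v : Fin n × Fin n}
    (h : SameComp P u v) (hu : Φ u) : Φ v := by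
  suffices Φ u ↔ Φ v from this.1 hu
  clear hu
  induction h with
  | rel x y hxy => exact ⟨hΦ x y hxy, hΦ y x hxy.symm⟩
  | refl => rfl
  | symm _ _ _ ih => exact ih.symm
  | trans _ _ _ _ _ ih₁ ih₂ => exact ih₁.trans ih₂

theorem SameComp.swap {u v : Fin n × Fin n} (h : SameComp P u v) :
    SameComp P (u.2, u.1) (v.2, v.1) :=
  h.imp_of_fgAdj (Φ := fun w => SameComp P (u.2, u.1) (w.2, w.1))
    (fun _ _ hvw hv =>
      let ⟨_, _, hv', hw'⟩ := hvw.exists_inBiclique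
      hv.trans (.of_inBiclique hv'.swap hw'.swap))
    (.refl _)

theorem SameComp.eq_or_incomparable {u v : Fin n × Fin n} (h : SameComp P u v) :
    v = u ∨ Incomparable P v :=
  h.imp_of_fgAdj (Φ := fun w => w = u ∨ Incomparable P w)
    (fun _ _ hvw _ => let ⟨a, b, _, hw⟩ := hvw.exists_inBiclique; Or.inr ⟨a, b, hw⟩)
    (Or.inl rfl)

theorem Incomparable.of_sameComp {u v : Fin n × Fin n} (hu : Incomparable P u)
    (h : SameComp P u v) : Incomparable P v :=
  h.eq_or_incomparable.elim (fun hvu => hvu ▸ hu) id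

theorem SameComp.eq_of_fst_eq_snd {u v : Fin n × Fin n} (h : SameComp P u v)
    (hv : v.1 = v.2) : v = u :=
  h.eq_or_incomparable.resolve_right fun hi => hi.ne hv

theorem ColoredPair.incomparable {u : Fin n × Fin n} (h : ColoredPair P u) :
    Incomparable P u :=
  let ⟨_, hne, hw⟩ := h
  hw.symm.eq_or_incomparable.resolve_left fun h => hne h.symm

theorem ColoredPair.of_sameComp {u v : Fin n × Fin n} (hu : ColoredPair P u)
    (h : SameComp P u v) : ColoredPair P v := by
  obtain ⟨w, hwu, hw⟩ := hu
  by_cases hwv : w = v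
  · exact ⟨u, fun huv => hwu (hwv.trans huv.symm), h.symm⟩
  · exact ⟨w, hwv, h.symm.trans hw⟩

theorem ColoredPair.swap {u : Fin n × Fin n} (h : ColoredPair P u) :
    ColoredPair P (u.2, u.1) :=
  let ⟨w, hwu, hw⟩ := h
  ⟨(w.2, w.1), fun h => hwu (Prod.ext (congrArg Prod.snd h) (congrArg Prod.fst h)), hw.swap⟩

/-- If the ballot of `p` is contained in the ballot of `r`, or conversely, then `(p, q)` and
`(r, q)` share a biclique; so otherwise `p` and `r` are incomparable. -/
theorem incomparable_of_not_sameComp {p q r : Fin n} (hpq : Incomparable P (p, q))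
    (hqr : Incomparable P (q, r)) (h : ¬ SameComp P (p, q) (r, q)) :
    Incomparable P (p, r) := by
  obtain ⟨a, b, ⟨hap, hbp⟩, hbq, haq⟩ := hpq
  obtain ⟨c, d, ⟨hcq, hdq⟩, hdr, hcr⟩ := hqr
  have he : ∃ e, P e p = true ∧ P e r = false := by
    by_contra! hsub
    have hcp : P c p = false := by
      cases hcp : P c p
      · rfl
      · exact absurd hcr (hsub c hcp)
    cases har : P a r
    · exact hsub a hap har
    · exact h (.of_inBiclique ⟨⟨hap, hcp⟩, hcq, haq⟩ ⟨⟨har, hcr⟩, hcq, haq⟩)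
  have hf : ∃ f, P f r = true ∧ P f p = false := by
    by_contra! hsub
    have hbr : P b r = false := by
      cases hbr : P b r
      · rfl
      · exact absurd hbp (hsub b hbr)
    cases hdp : P d p
    · exact hsub d hdr hdp
    · exact h (SameComp.of_inBiclique (u := (q, p)) (v := (q, r))
        ⟨⟨hbq, hdq⟩, hdp, hbp⟩ ⟨⟨hbq, hdq⟩, hdr, hbr⟩).swap
  obtain ⟨e, hep, her⟩ := he
  obtain ⟨f, hfr, hfp⟩ := hf
  exact ⟨e, f, ⟨hep, hfp⟩, hfr, her⟩

end

section

variable {m n : ℕ} {P : Fin m → Fin n → Bool}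

def complProfile (P : Fin m → Fin n → Bool) : Fin m → Fin n → Bool :=
  fun a v => !P a v

theorem pref_complProfile (v : Fin n) (a b : Fin m) :
    Pref (complProfile P) v a b ↔ Pref P v b a := by
  simp [Pref, complProfile, and_comm]

theorem inBiclique_complProfile (a b : Fin m) (u : Fin n × Fin n) :
    InBiclique (complProfile P) a b u ↔ InBiclique P b a u := by
  simp only [InBiclique, pref_complProfile]

theorem sameComp_complProfile : SameComp (complProfile P) = SameComp P := by
  have hCP : CP (complProfile P) = CP P := by
    ext t
    simp only [CP, Set.mem_ofPred_eq, pref_complProfile]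
    exact exists_comm
  unfold SameComp FGAdj
  rw [hCP]

theorem sameComp_of_inBiclique_of_approves_both {c d g : Fin m} {x y y' z : Fin n}
    (hy : InBiclique P c d (x, y)) (hy' : InBiclique P c d (x, y'))
    (hcz : P c z = true) (hdz : P d z = true) (hgy : P g y = true) (hgz : P g z = false)
    (n₁ : ¬ SameComp P (x, y) (z, y)) (n₂ : ¬ SameComp P (x, y) (x, z)) :
    SameComp P (y, z) (y', z) := by
  obtain ⟨⟨hcx, hdx⟩, hdy, hcy⟩ := hy
  obtain ⟨-, hdy', hcy'⟩ := hy'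
  cases hgy' : P g y'
  · cases hgx : P g x
    · exact absurd (.of_inBiclique ⟨⟨hcx, hgx⟩, hgy, hcy⟩ ⟨⟨hcz, hgz⟩, hgy, hcy⟩) n₁
    · have hyy' : SameComp P (x, y) (x, y') :=
        .of_inBiclique ⟨⟨hcx, hdx⟩, hdy, hcy⟩ ⟨⟨hcx, hdx⟩, hdy', hcy'⟩
      have hy'z : SameComp P (x, y') (x, z) :=
        .of_inBiclique ⟨⟨hgx, hdx⟩, hdy', hgy'⟩ ⟨⟨hgx, hdx⟩, hdz, hgz⟩
      exact absurd (hyy'.trans hy'z) n₂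
  · exact .of_inBiclique (a := g) (b := c) ⟨⟨hgy, hcy⟩, hcz, hgz⟩ ⟨⟨hgy', hcy'⟩, hcz, hgz⟩

theorem sameComp_of_inBiclique_snd {c d : Fin m} {x y y' z : Fin n}
    (hy : InBiclique P c d (x, y)) (hy' : InBiclique P c d (x, y'))
    (hyz : Incomparable P (y, z))
    (n₁ : ¬ SameComp P (x, y) (z, y)) (n₂ : ¬ SameComp P (x, y) (x, z)) :
    SameComp P (y, z) (y', z) := by
  obtain ⟨g, h, ⟨hgy, hhy⟩, hhz, hgz⟩ := hyz
  cases hcz : P c z <;> cases hdz : P d z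
  · -- complementing all ballots turns this case into the previous one
    rw [← inBiclique_complProfile] at hy hy'
    rw [← sameComp_complProfile] at n₁ n₂ ⊢
    exact sameComp_of_inBiclique_of_approves_both (g := h) hy hy'
      (by simp [complProfile, hdz]) (by simp [complProfile, hcz])
      (by simp [complProfile, hhy]) (by simp [complProfile, hhz]) n₁ n₂
  · exact absurd (.of_inBiclique hy ⟨hy.1, hdz, hcz⟩) n₂
  · exact absurd (.of_inBiclique hy ⟨⟨hcz, hdz⟩, hy.2⟩) n₁
  · exact sameComp_of_inBiclique_of_approves_both hy hy' hcz hdz hgy hgz n₁ n₂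

theorem sameComp_of_fgAdj_of_not_sameComp {v w : Fin n × Fin n} {r : Fin n}
    (hvw : FGAdj P v w) (hvr : Incomparable P (v.2, r)) (hrv : Incomparable P (r, v.1))
    (n₁ : ¬ SameComp P v (r, v.2)) (n₂ : ¬ SameComp P v (v.1, r)) :
    SameComp P (v.2, r) (w.2, r) ∧ SameComp P (r, v.1) (r, w.1) := by
  obtain ⟨t, ⟨a, b, h₁, h₂, h₃⟩, ⟨rfl, rfl⟩ | ⟨rfl, rfl⟩⟩ := hvw
  · refine ⟨.refl _, ?_⟩
    have := sameComp_of_inBiclique_snd (InBiclique.swap (u := (t.1, t.2.1)) ⟨h₁, h₂⟩)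
      (InBiclique.swap (u := (t.2.2, t.2.1)) ⟨h₃, h₂⟩) hrv.swap
      (fun h => n₂ h.swap) (fun h => n₁ h.swap)
    exact this.swap
  · exact ⟨sameComp_of_inBiclique_snd ⟨h₂, h₁⟩ ⟨h₂, h₃⟩ hvr n₁ n₂, .refl _⟩

theorem sameComp_of_rolling {p q r s t : Fin n}
    (hqr : Incomparable P (q, r)) (hrp : Incomparable P (r, p))
    (n₁ : ¬ SameComp P (p, q) (r, q)) (n₂ : ¬ SameComp P (p, q) (p, r))
    (h : SameComp P (p, q) (s, t)) :
    SameComp P (q, r) (t, r) ∧ SameComp P (r, p) (r, s) := by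
  refine (h.imp_of_fgAdj (Φ := fun w =>
      SameComp P (p, q) w ∧ SameComp P (q, r) (w.2, r) ∧ SameComp P (r, p) (r, w.1))
    ?_ ⟨.refl _, .refl _, .refl _⟩).2
  rintro v w hvw ⟨hv, hvr, hrv⟩
  obtain ⟨h₁, h₂⟩ := sameComp_of_fgAdj_of_not_sameComp hvw (hqr.of_sameComp hvr)
    (hrp.of_sameComp hrv) (fun h => n₁ (hv.trans (h.trans hvr.swap.symm)))
    (fun h => n₂ (hv.trans (h.trans hrv.swap.symm)))
  exact ⟨hv.trans (.of_fgAdj hvw), hvr.trans h₁, hrv.trans h₂⟩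

end

theorem Fin.sInf_val_image_ne_of_disjoint {n : ℕ} {A B : Set (Fin n)} (hA : A.Nonempty)
    (hB : B.Nonempty) (h : Disjoint A B) : sInf (Fin.val '' A) ≠ sInf (Fin.val '' B) := by
  obtain ⟨a, ha, hav⟩ := Nat.sInf_mem (hA.image Fin.val)
  obtain ⟨b, hb, hbv⟩ := Nat.sInf_mem (hB.image Fin.val)
  intro hab
  exact Set.disjoint_left.1 h ha (Fin.ext (hav.trans (hab.trans hbv.symm)) ▸ hb)

section

variable {m n : ℕ} {P : Fin m → Fin n → Bool}

/-- The triangles `p → q → r → p` of incomparable pairs along which a component can be rolled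
(`sameComp_of_rolling`): the color conditions of a three-colored triangle, weakened to what
that argument needs. -/
def IsRollingTriangle (P : Fin m → Fin n → Bool) (p q r : Fin n) : Prop :=
  Incomparable P (p, q) ∧ Incomparable P (q, r) ∧ Incomparable P (r, p) ∧
    ¬ SameComp P (p, q) (r, q) ∧ ¬ SameComp P (q, r) (p, r) ∧ ¬ SameComp P (r, p) (q, p)

def tails (P : Fin m → Fin n → Bool) (u : Fin n × Fin n) : Set (Fin n) :=
  Prod.fst '' {w | SameComp P u w}

def heads (P : Fin m → Fin n → Bool) (u : Fin n × Fin n) : Set (Fin n) :=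
  Prod.snd '' {w | SameComp P u w}

namespace IsRollingTriangle

variable {p q r : Fin n}

theorem rotate (h : IsRollingTriangle P p q r) : IsRollingTriangle P q r p :=
  let ⟨h₁, h₂, h₃, h₄, h₅, h₆⟩ := h
  ⟨h₂, h₃, h₁, h₅, h₆, h₄⟩

theorem roll (h : IsRollingTriangle P p q r) {s t : Fin n} (hst : SameComp P (p, q) (s, t)) :
    SameComp P (q, r) (t, r) ∧ SameComp P (r, p) (r, s) :=
  sameComp_of_rolling h.2.1 h.2.2.1 h.2.2.2.1 (fun h' => h.2.2.2.2.2 h'.swap.symm) hst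

theorem of_sameComp (h : IsRollingTriangle P p q r) {s t : Fin n}
    (hst : SameComp P (p, q) (s, t)) : IsRollingTriangle P s t r := by
  obtain ⟨h₁, h₂⟩ := h.roll hst
  exact ⟨h.1.of_sameComp hst, h.2.1.of_sameComp h₁, h.2.2.1.of_sameComp h₂,
    fun h' => h.2.2.2.1 (hst.trans (h'.trans h₁.symm.swap)),
    fun h' => h.2.2.2.2.1 (h₁.trans (h'.trans h₂.symm.swap)),
    fun h' => h.2.2.2.2.2 (h₂.trans (h'.trans hst.symm.swap))⟩

theorem sameComp_of_fst_of_snd (h : IsRollingTriangle P p q r) {s t s' t' : Fin n}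
    (hst : SameComp P (p, q) (s, t)) (hst' : SameComp P (p, q) (s', t')) :
    SameComp P (p, q) (s, t') :=
  hst.trans (((h.of_sameComp hst).rotate.roll ((h.roll hst).1.symm.trans (h.roll hst').1)).2)

theorem disjoint_tails_heads (h : IsRollingTriangle P p q r) :
    Disjoint (tails P (p, q)) (heads P (p, q)) := by
  refine Set.disjoint_left.2 ?_
  rintro x ⟨⟨s, t⟩, hst, hs : s = x⟩ ⟨⟨s', t'⟩, hst', ht' : t' = x⟩
  have hdiag := (h.sameComp_of_fst_of_snd hst hst').eq_of_fst_eq_snd (hs.trans ht'.symm)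
  obtain ⟨rfl, rfl⟩ := Prod.mk.inj hdiag
  exact h.1.ne (hs.trans ht'.symm)

theorem heads_eq_tails (h : IsRollingTriangle P p q r) : heads P (p, q) = tails P (q, r) := by
  ext t
  constructor
  · rintro ⟨⟨s, t⟩, hst, rfl⟩
    exact ⟨(t, r), (h.roll hst).1, rfl⟩
  · rintro ⟨⟨t, u⟩, htu, rfl⟩
    exact ⟨(p, t), (h.rotate.roll htu).2, rfl⟩

end IsRollingTriangle

end

section

variable {m n : ℕ} {P : Fin m → Fin n → Bool}

theorem sameColor_equivalence : Equivalence (SameColor P) where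
  refl u := Or.inl (.refl u)
  symm := by
    rintro u v (h | h)
    · exact Or.inl h.symm
    · exact Or.inr h.swap.symm
  trans := by
    rintro u v w (h₁ | h₁) (h₂ | h₂)
    · exact Or.inl (h₁.trans h₂)
    · exact Or.inr (h₁.trans h₂)
    · exact Or.inr (h₁.trans h₂.swap)
    · exact Or.inl (h₁.trans h₂.swap)

def sameColorSetoid (P : Fin m → Fin n → Bool) : Setoid (Fin n × Fin n) :=
  ⟨SameColor P, sameColor_equivalence⟩

noncomputable def colorRep (P : Fin m → Fin n → Bool) (u : Fin n × Fin n) : Fin n × Fin n :=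
  (Quotient.mk (sameColorSetoid P) u).out

theorem sameColor_colorRep (u : Fin n × Fin n) : SameColor P u (colorRep P u) :=
  sameColor_equivalence.symm (Quotient.mk_out (s := sameColorSetoid P) u)

theorem colorRep_eq {u v : Fin n × Fin n} (h : SameColor P u v) : colorRep P u = colorRep P v :=
  congrArg Quotient.out (Quotient.sound (s := sameColorSetoid P) h)

noncomputable def minTail (P : Fin m → Fin n → Bool) (u : Fin n × Fin n) : ℕ :=
  sInf (Fin.val '' tails P u)

noncomputable def minHead (P : Fin m → Fin n → Bool) (u : Fin n × Fin n) : ℕ :=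
  sInf (Fin.val '' heads P u)

/-- The orientation rule: a color `A × B` points from `A` to `B` iff `min A < min B`; ties, which
only occur for colors that are not products, are broken by a fixed representative. -/
def IsForward (P : Fin m → Fin n → Bool) (u : Fin n × Fin n) : Prop :=
  minTail P u < minHead P u ∨ (minTail P u = minHead P u ∧ SameComp P (colorRep P u) u)

theorem tails_nonempty (u : Fin n × Fin n) : (tails P u).Nonempty :=
  ⟨u.1, u, .refl u, rfl⟩

theorem heads_nonempty (u : Fin n × Fin n) : (heads P u).Nonempty :=
  ⟨u.2, u, .refl u, rfl⟩

theorem setOf_sameComp_swap (u : Fin n × Fin n) :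
    {w | SameComp P (u.2, u.1) w} = Prod.swap '' {w | SameComp P u w} := by
  ext w
  exact ⟨fun hw => ⟨(w.2, w.1), hw.swap, rfl⟩, by rintro ⟨v, hv, rfl⟩; exact hv.swap⟩

theorem minTail_swap (u : Fin n × Fin n) : minTail P (u.2, u.1) = minHead P u := by
  rw [minTail, minHead, tails, heads, setOf_sameComp_swap, Set.image_image Prod.fst]
  rfl

theorem minHead_swap (u : Fin n × Fin n) : minHead P (u.2, u.1) = minTail P u := by
  rw [minTail, minHead, tails, heads, setOf_sameComp_swap, Set.image_image Prod.snd]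
  rfl

theorem colorRep_swap (u : Fin n × Fin n) : colorRep P (u.2, u.1) = colorRep P u :=
  (colorRep_eq (Or.inr (.refl _))).symm

theorem isForward_congr {u v : Fin n × Fin n} (h : SameComp P u v) :
    IsForward P u ↔ IsForward P v := by
  have hcomp : {w | SameComp P u w} = {w | SameComp P v w} :=
    Set.ext fun w => ⟨h.symm.trans, h.trans⟩
  have hrep : colorRep P u = colorRep P v := colorRep_eq (Or.inl h)
  simp only [IsForward, minTail, minHead, tails, heads, hcomp, hrep]
  exact or_congr_right (and_congr_right fun _ => ⟨fun h' => h'.trans h, fun h' => h'.trans h.symm⟩)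

theorem IsForward.not_swap (hV : Valid P) {u : Fin n × Fin n} (hu : u.1 ≠ u.2)
    (h : IsForward P u) : ¬ IsForward P (u.2, u.1) := by
  rw [IsForward, minTail_swap, minHead_swap, colorRep_swap]
  rintro (hlt | ⟨heq, hrep⟩) <;> rcases h with h | ⟨heq', hrep'⟩
  · omega
  · omega
  · omega
  · exact hV u hu (hrep'.symm.trans hrep)

theorem isForward_or_isForward_swap (u : Fin n × Fin n) :
    IsForward P u ∨ IsForward P (u.2, u.1) := by
  rw [IsForward, IsForward, minTail_swap, minHead_swap, colorRep_swap]
  rcases lt_trichotomy (minTail P u) (minHead P u) with hlt | heq | hgt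
  · exact Or.inl (Or.inl hlt)
  · rcases sameColor_colorRep (P := P) u with h | h
    · exact Or.inl (Or.inr ⟨heq, h.symm⟩)
    · exact Or.inr (Or.inr ⟨heq.symm, h.swap.symm⟩)
  · exact Or.inr (Or.inl hgt)

end

section

variable {m n : ℕ} {P : Fin m → Fin n → Bool}

theorem IsRollingTriangle.minTail_lt_minHead {p q r : Fin n} (h : IsRollingTriangle P p q r)
    (hf : IsForward P (p, q)) : minTail P (p, q) < minHead P (p, q) :=
  hf.resolve_right fun hf' => Fin.sInf_val_image_ne_of_disjoint (tails_nonempty _)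
    (heads_nonempty _) h.disjoint_tails_heads hf'.1

theorem IsRollingTriangle.not_isForward {p q r : Fin n} (h : IsRollingTriangle P p q r) :
    ¬ (IsForward P (p, q) ∧ IsForward P (q, r) ∧ IsForward P (r, p)) := by
  rintro ⟨h₁, h₂, h₃⟩
  have e₁ : minHead P (p, q) = minTail P (q, r) := by rw [minHead, h.heads_eq_tails, minTail]
  have e₂ : minHead P (q, r) = minTail P (r, p) := by
    rw [minHead, h.rotate.heads_eq_tails, minTail]
  have e₃ : minHead P (r, p) = minTail P (p, q) := by
    rw [minHead, h.rotate.rotate.heads_eq_tails, minTail]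
  have := h.minTail_lt_minHead h₁
  have := h.rotate.minTail_lt_minHead h₂
  have := h.rotate.rotate.minTail_lt_minHead h₃
  omega

def Precedes (P : Fin m → Fin n → Bool) (a b : Fin n) : Prop :=
  Incomparable P (a, b) ∧ IsForward P (a, b)

theorem precedes_trans (hV : Valid P) {p q r : Fin n} (hpq : Precedes P p q)
    (hqr : Precedes P q r) : Precedes P p r := by
  obtain ⟨ipq, fpq⟩ := hpq
  obtain ⟨iqr, fqr⟩ := hqr
  by_cases hrev : SameComp P (p, q) (r, q)
  · exact absurd ((isForward_congr hrev).1 fpq) (fqr.not_swap hV iqr.ne)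
  have ipr := incomparable_of_not_sameComp ipq iqr hrev
  by_contra hpr
  have fpr : ¬ IsForward P (p, r) := fun h => hpr ⟨ipr, h⟩
  have hT : IsRollingTriangle P p q r :=
    ⟨ipq, iqr, ipr.swap, hrev, fun h => fpr ((isForward_congr h).1 fqr),
      fun h => fpr ((isForward_congr h.swap).2 fpq)⟩
  exact hT.not_isForward ⟨fpq, fqr, (isForward_or_isForward_swap (p, r)).resolve_left fpr⟩

theorem isStrictOrder_precedes (hV : Valid P) : IsStrictOrder (Fin n) (Precedes P) where
  irrefl _ h := h.1.ne rfl
  trans _ _ _ := precedes_trans hV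

def orientation (P : Fin m → Fin n → Bool) : Set (Fin n × Fin n) :=
  {u | ColoredPair P u ∧ IsForward P u}

theorem isOrient_orientation (hV : Valid P) : IsOrient P (orientation P) := by
  refine ⟨fun u hu => Or.inl hu.1, fun u v h => ?_, ?_, fun a b hab => ?_⟩
  · exact and_congr ⟨(·.of_sameComp h), (·.of_sameComp h.symm)⟩ (isForward_congr h)
  · rintro a b ⟨⟨hab, fab⟩, -, fba⟩
    exact fab.not_swap hV hab.incomparable.ne fba
  · exact (isForward_or_isForward_swap (a, b)).imp (⟨hab, ·⟩) (⟨hab.swap, ·⟩)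

theorem orientation_subset_precedes {a b : Fin n} (h : (a, b) ∈ orientation P) :
    Precedes P a b :=
  ⟨h.1.incomparable, h.2⟩

theorem isForward_iff_of_setOf_sameComp_eq_prod {u : Fin n × Fin n} (hu : u.1 ≠ u.2)
    {A B : Set (Fin n)} (h : {w | SameComp P u w} = A ×ˢ B) :
    IsForward P u ↔ sInf (Fin.val '' A) < sInf (Fin.val '' B) := by
  have hAB : (u.1 ∈ A ∧ u.2 ∈ B) := by
    rw [← Set.mem_prod, ← h]
    exact .refl u
  have hA : tails P u = A := by rw [tails, h, Set.fst_image_prod _ ⟨_, hAB.2⟩]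
  have hB : heads P u = B := by rw [heads, h, Set.snd_image_prod ⟨_, hAB.1⟩]
  have hdisj : Disjoint A B := by
    refine Set.disjoint_left.2 fun x hxA hxB => hu ?_
    have : (x, x) ∈ {w | SameComp P u w} := h ▸ ⟨hxA, hxB⟩
    rw [← (show SameComp P u (x, x) from this).eq_of_fst_eq_snd rfl]
  have hne := Fin.sInf_val_image_ne_of_disjoint ⟨_, hAB.1⟩ ⟨_, hAB.2⟩ hdisj
  rw [IsForward, minTail, minHead, hA, hB]
  exact or_iff_left fun h' => hne h'.1

end

theorem exists_isStrictTotalOrder_extension {α : Type*} (R : α → α → Prop)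
    [IsStrictOrder α R] : ∃ r : α → α → Prop, IsStrictTotalOrder α r ∧ R ≤ r := by
  let _ := partialOrderOfSO R
  obtain ⟨s, hs, hRs⟩ := extend_partialOrder ((· ≤ ·) : α → α → Prop)
  have hstrict : IsStrictTotalOrder α fun a b => ¬ s b a :=
    { trichotomous := fun a b hab hba => antisymm (not_not.1 hba) (not_not.1 hab)
      irrefl := fun a h => h (refl a)
      trans := fun a b c hab hbc hca => (total_of s a b).elim
        (fun h => hbc (_root_.trans hca h)) hab }
  refine ⟨_, hstrict, fun a b hab hba => ?_⟩
  obtain rfl : a = b := antisymm (hRs a b (Or.inr hab)) hba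
  exact irrefl a hab

theorem not_transGen_self_of_le {α : Type*} {R r : α → α → Prop} [IsStrictOrder α r]
    (h : R ≤ r) (a : α) : ¬ Relation.TransGen R a a := fun hR =>
  irrefl a (Relation.transGen_eq_self (r := r) ▸ Relation.TransGen.mono h a a hR)

theorem nbSat_of_or {V : Type*} {r : V → V → Prop} [IsStrictOrder V r] {i j k : V}
    (h : (r i j ∧ r k j) ∨ (r j i ∧ r j k)) : nbSat r (i, j, k) := by
  rcases h with ⟨hij, hkj⟩ | ⟨hji, hjk⟩
  · exact ⟨fun h => asymm hkj h.2, fun h => asymm hij h.2⟩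
  · exact ⟨fun h => asymm h.1 hji, fun h => asymm h.1 hjk⟩

section

variable {m n : ℕ} {P : Fin m → Fin n → Bool}

theorem exists_acyclic_orientation (hV : Valid P) :
    ∃ O : Set (Fin n × Fin n), IsOrient P O ∧
      (∀ a : Fin n, ¬ Relation.TransGen (fun x y => (x, y) ∈ O) a a) ∧
      (∀ (u : Fin n × Fin n) (A B : Set (Fin n)),
        InThreeColoredTriangle P u → {w | SameComp P u w} = A ×ˢ B →
        (u ∈ O ↔ sInf (Fin.val '' A) < sInf (Fin.val '' B))) := by
  have := isStrictOrder_precedes hV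
  refine ⟨orientation P, isOrient_orientation hV,
    not_transGen_self_of_le fun _ _ => orientation_subset_precedes, ?_⟩
  rintro u A B ⟨x, y, -, hxy, -, -, -, -, -, hu⟩ h
  have hcu : ColoredPair P u :=
    hu.elim (fun h => hxy.of_sameComp h.symm) (fun h => hxy.swap.of_sameComp h.symm)
  exact (and_iff_right hcu).trans (isForward_iff_of_setOf_sameComp_eq_prod hcu.incomparable.ne h)

theorem precedes_or_of_mem_CP {i j k : Fin n} (h : (i, j, k) ∈ CP P) :
    (Precedes P i j ∧ Precedes P k j) ∨ (Precedes P j i ∧ Precedes P j k) := by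
  obtain ⟨a, b, h₁, h₂, h₃⟩ := h
  have hij : InBiclique P a b (i, j) := ⟨h₁, h₂⟩
  have hkj : InBiclique P a b (k, j) := ⟨h₃, h₂⟩
  have hc := SameComp.of_inBiclique hij hkj
  exact (isForward_or_isForward_swap (i, j)).imp
    (fun hf => ⟨⟨⟨a, b, hij⟩, hf⟩, ⟨a, b, hkj⟩, (isForward_congr hc).1 hf⟩)
    (fun hf => ⟨⟨⟨b, a, hij.swap⟩, hf⟩, ⟨b, a, hkj.swap⟩, (isForward_congr hc.swap).1 hf⟩)

theorem exists_isStrictTotalOrder_nbSat (hV : Valid P) :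
    ∃ r : Fin n → Fin n → Prop, IsStrictTotalOrder (Fin n) r ∧ ∀ c ∈ CP P, nbSat r c := by
  have := isStrictOrder_precedes hV
  obtain ⟨r, hr, hext⟩ := exists_isStrictTotalOrder_extension (Precedes P)
  refine ⟨r, hr, fun ⟨i, j, k⟩ hc => nbSat_of_or ?_⟩
  exact (precedes_or_of_mem_CP hc).imp (.imp (hext _ _) (hext _ _)) (.imp (hext _ _) (hext _ _))

variable {r : Fin n → Fin n → Prop} [IsStrictTotalOrder (Fin n) r]

theorem SameComp.imp_of_nbSat (hsat : ∀ c ∈ CP P, nbSat r c) {u v : Fin n × Fin n}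
    (h : SameComp P u v) (hu : r u.1 u.2) : r v.1 v.2 := by
  refine h.imp_of_fgAdj (Φ := fun w => r w.1 w.2) ?_ hu
  rintro _ _ ⟨t, ht, ⟨rfl, rfl⟩ | ⟨rfl, rfl⟩⟩ hu
  all_goals
    obtain ⟨nb₁, nb₂⟩ := hsat t ht
    obtain ⟨a, b, -, h₂, h₃⟩ := ht
    have hkj := InBiclique.ne (u := (t.2.2, t.2.1)) ⟨h₃, h₂⟩
  · rcases trichotomous_of r t.2.2 t.2.1 with h | h | h
    · exact h
    · exact absurd h hkj
    · exact absurd ⟨hu, h⟩ nb₁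
  · rcases trichotomous_of r t.2.1 t.2.2 with h | h | h
    · exact h
    · exact absurd h.symm hkj
    · exact absurd ⟨h, hu⟩ nb₂

theorem valid_of_nbSat (hsat : ∀ c ∈ CP P, nbSat r c) : Valid P := by
  intro u hu hc
  rcases trichotomous_of r u.1 u.2 with h | h | h
  · exact asymm h (hc.imp_of_nbSat hsat h)
  · exact hu h
  · exact asymm h (hc.symm.imp_of_nbSat hsat h)

theorem not_monochromatic_cycle_of_nbSat (hsat : ∀ c ∈ CP P, nbSat r c)
    (u : Fin n × Fin n) (a : Fin n) :
    ¬ Relation.TransGen (fun x y => x ≠ y ∧ SameComp P (x, y) u) a a := by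
  by_cases hu : r u.1 u.2
  · exact not_transGen_self_of_le (fun x y hxy => hxy.2.symm.imp_of_nbSat hsat hu) a
  · refine not_transGen_self_of_le (r := Function.swap r) (fun x y hxy => ?_) a
    rcases trichotomous_of r x y with h | h | h
    · exact absurd (hxy.2.imp_of_nbSat hsat h) hu
    · exact absurd h hxy.1
    · exact h

end

/-- if the formula graph of an approval profile admits a complementary pairs
partition and the colorful graph has no monochromatic directed cycle, then an acyclic
orientation of its colors exists, and it can be chosen so that every color involved in a
three-colored triangle, being a biclique `A × B`, is oriented from `A` to `B` iff
`min A < min B`.  In particular, the profile is possibly single-crossing iff no component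
of the formula graph contains complementary vertices and the colorful graph has no
monochromatic cycle. -/
theorem stmt15 {m n : ℕ} (P : Fin m → Fin n → Bool) :
    ((Valid P ∧
      (∀ (u : Fin n × Fin n) (a : Fin n),
        ¬ Relation.TransGen (fun x y => x ≠ y ∧ SameComp P (x, y) u) a a)) →
      ∃ O : Set (Fin n × Fin n), IsOrient P O ∧
        (∀ a : Fin n, ¬ Relation.TransGen (fun x y => (x, y) ∈ O) a a) ∧
        (∀ (u : Fin n × Fin n) (A B : Set (Fin n)),
          InThreeColoredTriangle P u →
          {w | SameComp P u w} = A ×ˢ B →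
          (u ∈ O ↔ sInf (Fin.val '' A) < sInf (Fin.val '' B)))) ∧
    ((∃ r : Fin n → Fin n → Prop, IsStrictTotalOrder (Fin n) r ∧
        ∀ c ∈ CP P, nbSat r c) ↔
      (Valid P ∧
       ∀ (u : Fin n × Fin n) (a : Fin n),
         ¬ Relation.TransGen (fun x y => x ≠ y ∧ SameComp P (x, y) u) a a)) := by
  refine ⟨fun ⟨hV, _⟩ => exists_acyclic_orientation hV,
    fun ⟨_, _, hsat⟩ => ⟨valid_of_nbSat hsat, not_monochromatic_cycle_of_nbSat hsat⟩,
    fun ⟨hV, _⟩ => exists_isStrictTotalOrder_nbSat hV⟩
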